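/- Let θ > 0, a: R → R, and define ψ(x) by exp(-ψ(x)/θ) = ∫_R exp(-√(1 + p² + a(x)²)/θ) dp. Then for all x: |a(x)|/2 ≤ ψ(x) + θ ln C₁(θ) ≤ |a(x)| + θ ln(C₁(θ)/C₂(θ)), where C₁(θ) = ∫ exp(-√(1+p²)/(2θ)) dp and C₂(θ) = ∫ exp(-√(1+p²)/θ) dp. -/

import Mathlib

open MeasureTheory

open Set in

lemma integrable_exp_neg_mul_abs {b : ℝ} (hb : 0 < b) :
    Integrable (fun x : ℝ => Real.exp (-b * |x|)) := by
  have h1 : IntegrableOn (fun x : ℝ => Real.exp (-b * |x|)) (Ioi 0) := by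
    refine (exp_neg_integrableOn_Ioi 0 hb).congr_fun (fun x hx => ?_) measurableSet_Ioi
    rw [abs_of_pos hx]
  have h2 : IntegrableOn (fun x : ℝ => Real.exp (-b * |x|)) (Iic 0) := by
    rw [← Measure.map_neg_eq_self (volume : Measure ℝ)]
    have m : MeasurableEmbedding fun x : ℝ => -x := (Homeomorph.neg ℝ).measurableEmbedding
    rw [m.integrableOn_map_iff]
    simp_rw [Function.comp_def, abs_neg, neg_preimage, neg_Iic, neg_zero]
    exact (integrableOn_Ici_iff_integrableOn_Ioi).mpr h1
  have := h2.union h1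
  rw [Iic_union_Ioi] at this
  exact integrableOn_univ.mp this

lemma integrable_aux {θ : ℝ} (hθ : 0 < θ) (c : ℝ) (hc : 0 ≤ c) :
    Integrable (fun p : ℝ => Real.exp (-Real.sqrt (1 + p ^ 2 + c) / θ)) := by
  refine (integrable_exp_neg_mul_abs (b := 1/θ) (by positivity)).mono ?_ ?_
  · apply Continuous.aestronglyMeasurable
    continuity
  · refine Filter.Eventually.of_forall fun p => ?_
    rw [Real.norm_eq_abs, Real.norm_eq_abs, abs_of_pos (Real.exp_pos _),
      abs_of_pos (Real.exp_pos _)]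
    apply Real.exp_le_exp.2
    have key : |p| ≤ Real.sqrt (1 + p ^ 2 + c) := by
      calc |p| = Real.sqrt (p ^ 2) := (Real.sqrt_sq_eq_abs p).symm
      _ ≤ Real.sqrt (1 + p ^ 2 + c) := Real.sqrt_le_sqrt (by nlinarith)
    rw [div_eq_mul_inv, neg_mul, neg_mul, neg_le_neg_iff, one_div, mul_comm θ⁻¹]
    exact mul_le_mul_of_nonneg_right key (by positivity)

lemma integral_pos_aux {θ : ℝ} (hθ : 0 < θ) (c : ℝ) (hc : 0 ≤ c) :
    0 < ∫ p : ℝ, Real.exp (-Real.sqrt (1 + p ^ 2 + c) / θ) := by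
  refine (integral_pos_iff_support_of_nonneg (fun p => (Real.exp_pos _).le)
    (integrable_aux hθ c hc)).2 ?_
  have : (Function.support fun p : ℝ => Real.exp (-Real.sqrt (1 + p ^ 2 + c) / θ)) = Set.univ := by
    ext p; simp [Function.support, (Real.exp_pos _).ne']
  rw [this]
  simp [Real.volume_univ]

/-- In the fully relativistic case, with
exp(-ψ(x)/θ) = ∫ exp(-√(1+p²+a(x)²)/θ) dp, one has
|a(x)|/2 ≤ ψ(x) + θ ln C₁(θ) ≤ |a(x)| + θ ln(C₁(θ)/C₂(θ)). -/
theorem fully_relativistic_psi_bounds (θ : ℝ) (hθ : 0 < θ) (a ψ : ℝ → ℝ)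
    (hψ : ∀ x : ℝ, Real.exp (-ψ x / θ) =
      ∫ p : ℝ, Real.exp (-Real.sqrt (1 + p ^ 2 + a x ^ 2) / θ)) :
    ∀ x : ℝ,
      |a x| / 2 ≤ ψ x + θ * Real.log (∫ p : ℝ, Real.exp (-Real.sqrt (1 + p ^ 2) / (2 * θ))) ∧
      ψ x + θ * Real.log (∫ p : ℝ, Real.exp (-Real.sqrt (1 + p ^ 2) / (2 * θ))) ≤
        |a x| + θ * Real.log
          ((∫ p : ℝ, Real.exp (-Real.sqrt (1 + p ^ 2) / (2 * θ))) /
            ∫ p : ℝ, Real.exp (-Real.sqrt (1 + p ^ 2) / θ)) := by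
  intro x
  set A := |a x| with hA
  have hA0 : 0 ≤ A := abs_nonneg _
  have hA2 : a x ^ 2 = A ^ 2 := (sq_abs _).symm
  -- rewrite the 1+p^2 integrals in the 1+p^2+c form
  have e1 : (∫ p : ℝ, Real.exp (-Real.sqrt (1 + p ^ 2) / (2 * θ))) =
      ∫ p : ℝ, Real.exp (-Real.sqrt (1 + p ^ 2 + 0) / (2 * θ)) := by simp
  have e2 : (∫ p : ℝ, Real.exp (-Real.sqrt (1 + p ^ 2) / θ)) =
      ∫ p : ℝ, Real.exp (-Real.sqrt (1 + p ^ 2 + 0) / θ) := by simp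
  set C₁ := ∫ p : ℝ, Real.exp (-Real.sqrt (1 + p ^ 2) / (2 * θ)) with hC₁
  set C₂ := ∫ p : ℝ, Real.exp (-Real.sqrt (1 + p ^ 2) / θ) with hC₂
  have hC₁pos : 0 < C₁ := by
    have := integral_pos_aux (θ := 2*θ) (by positivity) 0 le_rfl
    rw [hC₁]; simpa using this
  have hC₂pos : 0 < C₂ := by
    have := integral_pos_aux hθ 0 le_rfl
    rw [hC₂]; simpa using this
  have hIint : Integrable (fun p : ℝ => Real.exp (-Real.sqrt (1 + p ^ 2 + a x ^ 2) / θ)) :=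
    integrable_aux hθ _ (sq_nonneg _)
  have hC₁int : Integrable (fun p : ℝ => Real.exp (-Real.sqrt (1 + p ^ 2) / (2 * θ))) := by
    have := integrable_aux (θ := 2*θ) (by positivity) 0 le_rfl
    simpa using this
  have hC₂int : Integrable (fun p : ℝ => Real.exp (-Real.sqrt (1 + p ^ 2) / θ)) := by
    have := integrable_aux hθ 0 le_rfl
    simpa using this
  -- pointwise bounds
  have hub : ∀ p : ℝ, Real.exp (-Real.sqrt (1 + p ^ 2 + a x ^ 2) / θ) ≤
      Real.exp (-A / (2*θ)) * Real.exp (-Real.sqrt (1 + p ^ 2) / (2 * θ)) := by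
    intro p
    rw [← Real.exp_add]
    apply Real.exp_le_exp.2
    have hs : (Real.sqrt (1 + p ^ 2) + A) / 2 ≤ Real.sqrt (1 + p ^ 2 + a x ^ 2) := by
      have h1 : Real.sqrt (1 + p ^ 2) ≤ Real.sqrt (1 + p ^ 2 + a x ^ 2) :=
        Real.sqrt_le_sqrt (by nlinarith [sq_nonneg (a x)])
      have h2 : A ≤ Real.sqrt (1 + p ^ 2 + a x ^ 2) := by
        rw [hA, ← Real.sqrt_sq_eq_abs]
        exact Real.sqrt_le_sqrt (by nlinarith [sq_nonneg p])
      linarith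
    rw [← add_div, div_le_div_iff₀ hθ (by positivity : (0:ℝ) < 2*θ)]
    nlinarith [mul_le_mul_of_nonneg_left hs hθ.le]
  have hlb : ∀ p : ℝ, Real.exp (-A / θ) * Real.exp (-Real.sqrt (1 + p ^ 2) / θ) ≤
      Real.exp (-Real.sqrt (1 + p ^ 2 + a x ^ 2) / θ) := by
    intro p
    rw [← Real.exp_add]
    apply Real.exp_le_exp.2
    rw [← add_div, div_le_div_iff₀ hθ hθ]
    have hs : Real.sqrt (1 + p ^ 2 + a x ^ 2) ≤ A + Real.sqrt (1 + p ^ 2) := by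
      rw [← Real.sqrt_sq_eq_abs] at hA
      rw [hA]
      have h1 : (0:ℝ) ≤ Real.sqrt (1 + p^2) := Real.sqrt_nonneg _
      have h2 : Real.sqrt (a x ^ 2) * Real.sqrt (a x ^ 2) = a x ^ 2 :=
        Real.mul_self_sqrt (sq_nonneg _)
      have h3 : Real.sqrt (1 + p^2) * Real.sqrt (1 + p^2) = 1 + p^2 :=
        Real.mul_self_sqrt (by positivity)
      have h4 : (0:ℝ) ≤ Real.sqrt (a x ^ 2) := Real.sqrt_nonneg _
      calc Real.sqrt (1 + p ^ 2 + a x ^ 2)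
          ≤ Real.sqrt ((Real.sqrt (a x ^ 2) + Real.sqrt (1 + p^2))^2) :=
            Real.sqrt_le_sqrt (by nlinarith)
        _ = Real.sqrt (a x ^ 2) + Real.sqrt (1 + p^2) := Real.sqrt_sq (by positivity)
    nlinarith
  -- integral bounds
  have hI := hψ x
  have hUB : Real.exp (-ψ x / θ) ≤ Real.exp (-A / (2*θ)) * C₁ := by
    rw [hI, hC₁, ← integral_const_mul]
    exact integral_mono hIint (hC₁int.const_mul _) hub
  have hLB : Real.exp (-A / θ) * C₂ ≤ Real.exp (-ψ x / θ) := by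
    rw [hI, hC₂, ← integral_const_mul]
    exact integral_mono (hC₂int.const_mul _) hIint hlb
  -- take logs
  have hlog1 : -ψ x / θ ≤ -A / (2*θ) + Real.log C₁ := by
    have := Real.log_le_log (Real.exp_pos _) hUB
    rwa [Real.log_exp, Real.log_mul (Real.exp_ne_zero _) hC₁pos.ne', Real.log_exp] at this
  have hlog2 : -A / θ + Real.log C₂ ≤ -ψ x / θ := by
    have := Real.log_le_log (by positivity) hLB
    rwa [Real.log_exp, Real.log_mul (Real.exp_ne_zero _) hC₂pos.ne', Real.log_exp] at this
  rw [Real.log_div hC₁pos.ne' hC₂pos.ne']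
  constructor
  · have := mul_le_mul_of_nonneg_left hlog1 hθ.le
    rw [mul_add] at this
    have h1 : θ * (-ψ x / θ) = -ψ x := by
      field_simp
    have h2 : θ * (-A / (2*θ)) = -A/2 := by
      field_simp
    rw [h1, h2] at this
    linarith
  · have := mul_le_mul_of_nonneg_left hlog2 hθ.le
    rw [mul_add] at this
    have h1 : θ * (-ψ x / θ) = -ψ x := by
      field_simp
    have h2 : θ * (-A / θ) = -A := by
      field_simp
    rw [h1, h2] at this
    nlinarith [mul_le_mul_of_nonneg_left hlog2 hθ.le]
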